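/- Let A be a d×d, B a d×e, D an e×e real matrix, and suppose M = [[A, B], [Bᵀ, D]] is positive semi-definite. Then the generalized Schur complement A − B·D†·Bᵀ is positive semi-definite, and moreover M − [[A − B·D†·Bᵀ, 0], [0, 0]] is positive semi-definite, where D† is the Moore–Penrose pseudoinverse of D. -/

import Mathlib

/-!
If `D v = 0`, then `(0, v)` is isotropic for the positive semi-definite `M = [[A, B], [Bᵀ, D]]`;
writing `M = XᵀX` gives `X (0, v) = 0`, hence `M (0, v) = 0` and `B v = 0`. Applied to the columns
of `1 - D† D` this yields `B D† D = B`. With that identity both matrices are congruences of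
positive semi-definite ones: `A - B D† Bᵀ = V M Vᵀ` for `V = [1, -B D†]`, and
`M - [[A - B D† Bᵀ, 0], [0, 0]] = P D Pᵀ` for `P = [B D†; 1]`.
-/

open Matrix

/-- `Ddag` is a Moore–Penrose pseudoinverse of `D`. -/
def IsMoorePenrose {n m : Type*} [Fintype n] [Fintype m]
    (D : Matrix n m ℝ) (Ddag : Matrix m n ℝ) : Prop :=
  D * Ddag * D = D ∧ Ddag * D * Ddag = Ddag ∧
    (D * Ddag)ᵀ = D * Ddag ∧ (Ddag * D)ᵀ = Ddag * D

namespace Matrix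

variable {n m : Type*}

open scoped ComplexOrder in
theorem PosSemidef.mul_eq_zero_of_conjTranspose_mul_mul_eq_zero [Fintype n]
    {𝕜 : Type*} [RCLike 𝕜]
    {M : Matrix n n 𝕜} (hM : M.PosSemidef) {E : Matrix n m 𝕜} (h : Eᴴ * M * E = 0) :
    M * E = 0 := by
  classical
  obtain ⟨X, rfl⟩ : ∃ X : Matrix n n 𝕜, M = star X * X := by
    open scoped MatrixOrder Matrix.Norms.L2Operator in
    exact CStarAlgebra.nonneg_iff_eq_star_mul_self.mp hM.nonneg
  have hXE : X * E = 0 := by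
    rwa [← conjTranspose_mul_self_eq_zero, conjTranspose_mul, ← Matrix.mul_assoc,
      Matrix.mul_assoc _ Xᴴ, ← star_eq_conjTranspose]
  rw [Matrix.mul_assoc, hXE, Matrix.mul_zero]

theorem PosSemidef.mul_mul_transpose_same [Fintype n] [Fintype m] {M : Matrix n n ℝ}
    (hM : M.PosSemidef) (V : Matrix m n ℝ) : (V * M * Vᵀ).PosSemidef := by
  simpa only [conjTranspose_eq_transpose_of_trivial] using hM.mul_mul_conjTranspose_same V

theorem PosSemidef.mul_mul_eq_of_fromBlocks [Fintype n] [Fintype m] [DecidableEq m]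
    {A : Matrix n n ℝ} {B : Matrix n m ℝ}
    {D C : Matrix m m ℝ} (hM : (fromBlocks A B Bᵀ D).PosSemidef) (hC : D * C * D = D) :
    B * C * D = B := by
  set E : Matrix (n ⊕ m) m ℝ := fromRows 0 (1 - C * D)
  have hDE : D * (1 - C * D) = 0 := by
    rw [Matrix.mul_sub, Matrix.mul_one, ← Matrix.mul_assoc, hC, sub_self]
  have hME : fromBlocks A B Bᵀ D * E = fromRows (B * (1 - C * D)) 0 := by
    simp only [E, fromBlocks_mul_fromRows, Matrix.mul_zero, zero_add, hDE]
  have hEME : Eᴴ * fromBlocks A B Bᵀ D * E = 0 := by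
    rw [Matrix.mul_assoc, hME, conjTranspose_eq_transpose_of_trivial, transpose_fromRows,
      fromCols_mul_fromRows, transpose_zero, Matrix.zero_mul, Matrix.mul_zero, add_zero]
  have hBE := hM.mul_eq_zero_of_conjTranspose_mul_mul_eq_zero hEME
  rw [hME, ← fromRows_zero, fromRows_inj.eq_iff, Matrix.mul_sub, Matrix.mul_one,
    sub_eq_zero] at hBE
  rw [Matrix.mul_assoc, ← hBE.1]

variable {R : Type*} [CommRing R]

theorem fromCols_mul_fromBlocks_mul_transpose_fromCols [Fintype n] [Fintype m] [DecidableEq n]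
    (A : Matrix n n R) {B : Matrix n m R} {C D : Matrix m m R} (hBC : B * C * D = B) :
    fromCols (1 : Matrix n n R) (-(B * C)) * fromBlocks A B Bᵀ D *
      (fromCols (1 : Matrix n n R) (-(B * C)))ᵀ = A - B * C * Bᵀ := by
  rw [fromCols_mul_fromBlocks, transpose_fromCols, fromCols_mul_fromRows]
  simp only [Matrix.one_mul, Matrix.neg_mul, hBC, add_neg_cancel, Matrix.zero_mul, add_zero,
    transpose_one, Matrix.mul_one, sub_eq_add_neg]

theorem fromRows_mul_mul_transpose_fromRows [Fintype m] [DecidableEq m]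
    {B : Matrix n m R} {C D : Matrix m m R} (hD : D.IsSymm) (hBC : B * C * D = B) :
    fromRows (B * C) 1 * D * (fromRows (B * C) 1)ᵀ = fromBlocks (B * C * Bᵀ) B Bᵀ D := by
  have hDCB : D * Cᵀ * Bᵀ = Bᵀ := by
    rw [← hD.eq, ← transpose_mul, ← transpose_mul, ← Matrix.mul_assoc, hBC]
  rw [fromRows_mul, transpose_fromRows, fromRows_mul_fromCols, transpose_mul, transpose_one,
    Matrix.one_mul, Matrix.mul_one, Matrix.mul_one, Matrix.mul_assoc (B * C),
    ← Matrix.mul_assoc D, hDCB, hBC]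

end Matrix

/-- If `M = [[A, B], [Bᵀ, D]]` is positive semi-definite, then its generalized Schur
complement `A − B D† Bᵀ` is positive semi-definite, and moreover
`M − [[A − B D† Bᵀ, 0], [0, 0]]` is positive semi-definite. -/
theorem schur_complement_posSemidef
    {d e : Type*} [Fintype d] [Fintype e] [DecidableEq d] [DecidableEq e]
    (A : Matrix d d ℝ) (B : Matrix d e ℝ) (D : Matrix e e ℝ)
    (Ddag : Matrix e e ℝ) (hD : IsMoorePenrose D Ddag)
    (hM : (Matrix.fromBlocks A B Bᵀ D).PosSemidef) :
    (A - B * Ddag * Bᵀ).PosSemidef ∧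
      (Matrix.fromBlocks A B Bᵀ D -
        Matrix.fromBlocks (A - B * Ddag * Bᵀ) 0 0 0).PosSemidef := by
  have hBD := hM.mul_mul_eq_of_fromBlocks hD.1
  have hDpos : D.PosSemidef := hM.submatrix Sum.inr
  have hDsymm : D.IsSymm :=
    (conjTranspose_eq_transpose_of_trivial D).symm.trans hDpos.isHermitian
  have hdiff : fromBlocks A B Bᵀ D - fromBlocks (A - B * Ddag * Bᵀ) 0 0 0 =
      fromBlocks (B * Ddag * Bᵀ) B Bᵀ D := by
    rw [sub_eq_add_neg, fromBlocks_neg, fromBlocks_add]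
    simp only [neg_sub, add_sub_cancel, neg_zero, add_zero]
  constructor
  · rw [← fromCols_mul_fromBlocks_mul_transpose_fromCols A hBD]
    exact hM.mul_mul_transpose_same _
  · rw [hdiff, ← fromRows_mul_mul_transpose_fromRows hDsymm hBD]
    exact hDpos.mul_mul_transpose_same _
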